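/- Let F₁ = F₂ = F₃ : [0,1] → ℂ be given by F_i(x) = exp(2πi N x²) and F₄(x) = exp(−2πi N x²), and let F̂_i(n) = ∫₀¹ F_i(x) e^{−2πi n x} dx denote their Fourier coefficients. Then there exist constants c > 0, C > 0 and N₀ such that for all integers N ≥ N₀: (a) the sum of ∏_{i=1}^{4} |F̂_i(n_i)| over all quadruples (n₁, n₂, n₃, n₄) ∈ ℤ⁴ with |n_i| ≤ 2N for each i, n₁ − n₂ + 2n₃ = 0 and n₁ + n₂ + n₃ + n₄ = 0, is at least c; and (b) sup_{n ∈ ℤ} |F̂_i(n)| ≤ C N^{-1/2} for each 1 ≤ i ≤ 4. Consequently the sum in (a) is not O(max_i ‖F̂_i‖_∞), and in fact is ≥ (c/C⁴) N² · ∏_{i=1}^4 ‖F̂_i‖_∞. -/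

import Mathlib

/-- The `n`-th Fourier coefficient on `[0,1]` of the quadratic phase function
`x ↦ e^{2πi a x²}`, i.e. `F̂(n) = ∫₀¹ e^{2πi a x²} e^{−2πi n x} dx`. -/
noncomputable def quadFourierCoeff (a : ℝ) (n : ℤ) : ℂ :=
  ∫ x in (0:ℝ)..1,
    Complex.exp (2 * Real.pi * Complex.I * ((a : ℂ) * (x : ℂ) ^ 2 - (n : ℂ) * (x : ℂ)))

/-- The quadruples `(n₁,n₂,n₃,n₄) ∈ ℤ⁴` with `|nᵢ| ≤ 2N` for each `i`, satisfying the
frequency constraints `n₁ − n₂ + 2n₃ = 0` and `n₁ + n₂ + n₃ + n₄ = 0` of the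
trilinear Hilbert transform. -/
noncomputable def thtQuadruples (N : ℕ) : Finset (ℤ × ℤ × ℤ × ℤ) :=
  ((Finset.Icc (-(2 * (N : ℤ))) (2 * (N : ℤ))) ×ˢ (Finset.Icc (-(2 * (N : ℤ))) (2 * (N : ℤ))) ×ˢ
      (Finset.Icc (-(2 * (N : ℤ))) (2 * (N : ℤ))) ×ˢ
      (Finset.Icc (-(2 * (N : ℤ))) (2 * (N : ℤ)))).filter
    (fun q => q.1 - q.2.1 + 2 * q.2.2.1 = 0 ∧ q.1 + q.2.1 + q.2.2.1 + q.2.2.2 = 0)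

/-! Completing the square, `F̂(n)` for the phase `e(N x²)` is `N^{-1/2}` times a Fresnel integral
`∫ e(v²) dv` over an interval of length `√N` starting at `-n/(2√N)`. Integrating by parts away
from the stationary point `0` bounds all such integrals uniformly, so `‖F̂‖_∞ ≲ N^{-1/2}`; when
the interval contains `[-1/2, 1/2]`, i.e. `√N ≤ n ≤ 2N - √N`, the stationary point dominates and
`|F̂(n)| ≳ N^{-1/2}`. The `≳ N²` constrained quadruples with `n₁, n₃ ∈ (N/8, N/4]` have all
their frequencies (`-n₄` for the conjugate phase) in that range, so the sum is `≳ N² · N^{-2}`. -/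

open Real Complex ComplexConjugate intervalIntegral

noncomputable def fresnelPhase (v : ℝ) : ℂ := cexp (2 * π * I * (v : ℂ) ^ 2)

lemma continuous_fresnelPhase : Continuous fresnelPhase := by
  unfold fresnelPhase; fun_prop

lemma fresnelPhase_intervalIntegrable (a b : ℝ) :
    IntervalIntegrable fresnelPhase MeasureTheory.volume a b :=
  continuous_fresnelPhase.intervalIntegrable a b

lemma norm_fresnelPhase (v : ℝ) : ‖fresnelPhase v‖ = 1 := by
  rw [fresnelPhase, show 2 * π * I * (v : ℂ) ^ 2 = ((2 * π * v ^ 2 : ℝ) : ℂ) * I by push_cast; ring,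
    norm_exp_ofReal_mul_I]

lemma re_fresnelPhase (v : ℝ) : (fresnelPhase v).re = Real.cos (2 * π * v ^ 2) := by
  rw [fresnelPhase, show 2 * π * I * (v : ℂ) ^ 2 = ((2 * π * v ^ 2 : ℝ) : ℂ) * I by push_cast; ring,
    exp_ofReal_mul_I_re]

lemma fresnelPhase_neg (v : ℝ) : fresnelPhase (-v) = fresnelPhase v := by
  simp [fresnelPhase]

lemma integral_fresnelPhase_neg (a b : ℝ) :
    ∫ v in -b..-a, fresnelPhase v = ∫ v in a..b, fresnelPhase v := by
  simpa [fresnelPhase_neg] using (integral_comp_neg (a := a) (b := b) fresnelPhase).symm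

lemma norm_four_pi_I_mul {x : ℝ} (hx : 0 ≤ x) : ‖4 * π * I * (x : ℂ)‖ = 4 * π * x := by
  rw [show 4 * π * I * (x : ℂ) = ((4 * π * x : ℝ) : ℂ) * I by push_cast; ring, norm_mul, norm_I,
    mul_one, norm_real, Real.norm_of_nonneg (by positivity)]

lemma hasDerivAt_fresnelPhase_div {v : ℝ} (hv : v ≠ 0) :
    HasDerivAt (fun w : ℝ => fresnelPhase w / (4 * π * I * w))
      (fresnelPhase v - fresnelPhase v / (4 * π * I * (v : ℂ) ^ 2)) v := by
  have hv' : (4 * π * I * (v : ℂ)) ≠ 0 := by simp [pi_ne_zero, hv]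
  have hphase : HasDerivAt fresnelPhase (fresnelPhase v * (2 * π * I * (2 * v))) v := by
    have := ((hasDerivAt_pow 2 (v : ℂ)).const_mul (2 * π * I)).cexp.comp_ofReal
    convert this using 1
    · rfl
    · norm_num [fresnelPhase]
  have hlin : HasDerivAt (fun w : ℝ => 4 * π * I * (w : ℂ)) (4 * π * I) v := by
    simpa using ((hasDerivAt_id (v : ℂ)).const_mul (4 * π * I)).comp_ofReal
  refine (hphase.div hlin hv').congr_deriv ?_
  have : (v : ℂ) ≠ 0 := by exact_mod_cast hv
  field_simp
  ring

lemma norm_integral_fresnelPhase_le {a b : ℝ} (ha : 0 < a) (hab : a ≤ b) :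
    ‖∫ v in a..b, fresnelPhase v‖ ≤ (2 * π * a)⁻¹ := by
  set φ : ℝ → ℂ := fun w => fresnelPhase w / (4 * π * I * w)
  set g : ℝ → ℂ := fun w => fresnelPhase w / (4 * π * I * (w : ℂ) ^ 2)
  have hpos : ∀ x ∈ Set.uIcc a b, 0 < x := fun x hx =>
    ha.trans_le (Set.uIcc_of_le hab ▸ hx).1
  have norm_φ : ∀ x, 0 < x → ‖φ x‖ = (4 * π * x)⁻¹ := fun x hx => by
    rw [norm_div, norm_fresnelPhase, norm_four_pi_I_mul hx.le, one_div]
  have norm_g : ∀ x, 0 < x → ‖g x‖ = (4 * π)⁻¹ * x ^ (-2 : ℤ) := fun x hx => by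
    rw [norm_div, norm_fresnelPhase, ← Complex.ofReal_pow, norm_four_pi_I_mul (by positivity)]
    simp only [one_div, mul_inv, zpow_neg, zpow_two, pow_two]
  have hg : IntervalIntegrable g MeasureTheory.volume a b := by
    refine (continuous_fresnelPhase.continuousOn.div (by fun_prop) fun x hx => ?_).intervalIntegrable
    simp [pi_ne_zero, (hpos x hx).ne']
  have hparts : ∫ v in a..b, fresnelPhase v = (φ b - φ a) + ∫ v in a..b, g v := by
    rw [← integral_eq_sub_of_hasDerivAt (fun x hx => hasDerivAt_fresnelPhase_div (hpos x hx).ne')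
      ((fresnelPhase_intervalIntegrable a b).sub hg), ← integral_add
      ((fresnelPhase_intervalIntegrable a b).sub hg) hg]
    simp
  have hrest : ‖∫ v in a..b, g v‖ ≤ (4 * π)⁻¹ * (a⁻¹ - b⁻¹) :=
    calc ‖∫ v in a..b, g v‖ ≤ ∫ v in a..b, ‖g v‖ := norm_integral_le_integral_norm hab
      _ = ∫ v in a..b, (4 * π)⁻¹ * v ^ (-2 : ℤ) :=
        integral_congr fun x hx => norm_g x (hpos x hx)
      _ = (4 * π)⁻¹ * (a⁻¹ - b⁻¹) := by
        rw [integral_const_mul, integral_zpow (Or.inr ⟨by norm_num, fun h => (hpos 0 h).false⟩)]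
        norm_num
        ring
  calc ‖∫ v in a..b, fresnelPhase v‖ ≤ ‖φ b‖ + ‖φ a‖ + (4 * π)⁻¹ * (a⁻¹ - b⁻¹) := by
        rw [hparts]
        exact (norm_add_le _ _).trans (add_le_add (norm_sub_le _ _) hrest)
    _ = (2 * π * a)⁻¹ := by
        rw [norm_φ b (ha.trans_le hab), norm_φ a ha]
        field_simp
        ring

lemma norm_integral_fresnelPhase_le_abs_sub (a b : ℝ) :
    ‖∫ v in a..b, fresnelPhase v‖ ≤ |b - a| := by
  simpa using norm_integral_le_of_norm_le_const (fun x _ => (norm_fresnelPhase x).le)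
    (a := a) (b := b)

lemma norm_integral_zero_fresnelPhase_le_one (b : ℝ) : ‖∫ v in 0..b, fresnelPhase v‖ ≤ 1 := by
  wlog hb : 0 ≤ b generalizing b
  · have := this (-b) (by linarith)
    rwa [← integral_fresnelPhase_neg, neg_neg, neg_zero, integral_symm, norm_neg] at this
  rcases le_or_gt b (1 / 2) with hb' | hb'
  · refine (norm_integral_fresnelPhase_le_abs_sub 0 b).trans ?_
    rw [sub_zero, abs_of_nonneg hb]
    linarith
  have h₁ := norm_integral_fresnelPhase_le_abs_sub 0 (1 / 2)
  have h₂ := norm_integral_fresnelPhase_le (by norm_num : (0 : ℝ) < 1 / 2) hb'.le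
  have hπ : (2 * π * (1 / 2))⁻¹ ≤ 1 / 2 := by
    rw [inv_le_comm₀ (by positivity) (by norm_num)]; linarith [pi_gt_three]
  rw [← integral_add_adjacent_intervals (fresnelPhase_intervalIntegrable 0 (1 / 2))
    (fresnelPhase_intervalIntegrable (1 / 2) b)]
  refine (norm_add_le _ _).trans ?_
  norm_num at h₁
  linarith

lemma norm_integral_fresnelPhase_le_two (a b : ℝ) : ‖∫ v in a..b, fresnelPhase v‖ ≤ 2 := by
  rw [← integral_add_adjacent_intervals (fresnelPhase_intervalIntegrable a 0)
    (fresnelPhase_intervalIntegrable 0 b), integral_symm 0 a]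
  refine (norm_add_le _ _).trans ?_
  rw [norm_neg]
  linarith [norm_integral_zero_fresnelPhase_le_one a, norm_integral_zero_fresnelPhase_le_one b]

lemma three_quarters_le_re_integral_fresnelPhase :
    3 / 4 ≤ (∫ v in -(1 / 2)..(1 / 2), fresnelPhase v).re := by
  have hab : -(1 / 2) ≤ (1 / 2 : ℝ) := by norm_num
  have hcos : ∀ x : ℝ, 1 - 2 * π ^ 2 * x ^ 4 ≤ Real.cos (2 * π * x ^ 2) := fun x => by
    linarith [one_sub_sq_div_two_le_cos (x := 2 * π * x ^ 2)]
  have hpoly : ∫ v in -(1 / 2)..(1 / 2), (1 - 2 * π ^ 2 * v ^ 4) = 1 - π ^ 2 / 40 := by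
    rw [integral_sub intervalIntegrable_const ((by fun_prop : Continuous
      fun v : ℝ => 2 * π ^ 2 * v ^ 4).intervalIntegrable _ _), integral_const, integral_const_mul,
      integral_pow]
    norm_num
    ring
  have hre := intervalIntegral_re (fresnelPhase_intervalIntegrable (-(1 / 2)) (1 / 2))
  simp only [RCLike.re_to_complex] at hre
  rw [← hre]
  calc 3 / 4 ≤ 1 - π ^ 2 / 40 := by nlinarith [pi_lt_d2, pi_pos]
    _ ≤ ∫ v in -(1 / 2)..(1 / 2), (fresnelPhase v).re := by
      rw [← hpoly]
      refine integral_mono_on hab ((by fun_prop : Continuous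
        fun v : ℝ => 1 - 2 * π ^ 2 * v ^ 4).intervalIntegrable _ _) ?_ fun x _ => ?_
      · exact (continuous_re.comp continuous_fresnelPhase).intervalIntegrable _ _
      · rw [re_fresnelPhase]; exact hcos x

/-- In real part, `[-1/2, 1/2]` contributes at least `3/4` and each tail at most `1/π`. -/
lemma one_tenth_le_norm_integral_fresnelPhase {a b : ℝ} (ha : a ≤ -(1 / 2)) (hb : 1 / 2 ≤ b) :
    1 / 10 ≤ ‖∫ v in a..b, fresnelPhase v‖ := by
  have tail_le : ∀ c, 1 / 2 ≤ c → ‖∫ v in (1 / 2)..c, fresnelPhase v‖ ≤ π⁻¹ := fun c hc => by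
    convert norm_integral_fresnelPhase_le (by norm_num : (0 : ℝ) < 1 / 2) hc using 1
    ring
  have hleft := tail_le (-a) (by linarith)
  rw [← integral_fresnelPhase_neg, neg_neg] at hleft
  have hright := tail_le b hb
  have hsplit : ∫ v in a..b, fresnelPhase v = (∫ v in a..-(1 / 2), fresnelPhase v) +
      (∫ v in -(1 / 2)..(1 / 2), fresnelPhase v) + ∫ v in (1 / 2)..b, fresnelPhase v := by
    rw [integral_add_adjacent_intervals (fresnelPhase_intervalIntegrable _ _)
      (fresnelPhase_intervalIntegrable _ _), integral_add_adjacent_intervals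
      (fresnelPhase_intervalIntegrable _ _) (fresnelPhase_intervalIntegrable _ _)]
  have hπ : π⁻¹ ≤ 1 / 3.14 := by rw [one_div]; exact inv_anti₀ (by norm_num) pi_gt_d2.le
  calc (1 : ℝ) / 10 ≤ 3 / 4 - π⁻¹ - π⁻¹ := by linarith
    _ ≤ (∫ v in a..b, fresnelPhase v).re := by
      rw [hsplit, add_re, add_re]
      linarith [three_quarters_le_re_integral_fresnelPhase, neg_abs_le (∫ v in a..-(1 / 2),
        fresnelPhase v).re, neg_abs_le (∫ v in (1 / 2)..b, fresnelPhase v).re,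
        (abs_re_le_norm _).trans hleft, (abs_re_le_norm _).trans hright]
    _ ≤ ‖∫ v in a..b, fresnelPhase v‖ := re_le_norm _

lemma quadFourierCoeff_integrand_eq {t : ℝ} (ht : 0 < t) (n : ℤ) (x : ℝ) :
    cexp (2 * π * I * ((t : ℂ) * (x : ℂ) ^ 2 - (n : ℂ) * (x : ℂ))) =
      cexp ((-(π * n ^ 2 / (2 * t)) : ℝ) * I) * fresnelPhase (√t * x - n / (2 * √t)) := by
  have hs : (√t : ℂ) ≠ 0 := by exact_mod_cast (sqrt_pos.2 ht).ne'
  have ht' : (t : ℂ) = (√t : ℂ) ^ 2 := by exact_mod_cast (sq_sqrt ht.le).symm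
  rw [fresnelPhase, ← Complex.exp_add]
  congr 1
  push_cast
  rw [ht']
  field_simp
  ring

lemma norm_quadFourierCoeff {t : ℝ} (ht : 0 < t) (n : ℤ) :
    ‖quadFourierCoeff t n‖ =
      (√t)⁻¹ * ‖∫ v in -(n / (2 * √t))..(√t - n / (2 * √t)), fresnelPhase v‖ := by
  have hs : √t ≠ 0 := (sqrt_pos.2 ht).ne'
  rw [quadFourierCoeff, integral_congr fun x _ => quadFourierCoeff_integrand_eq ht n x,
    integral_const_mul, integral_comp_mul_sub (fun v => fresnelPhase v) hs, norm_mul,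
    norm_exp_ofReal_mul_I, one_mul, norm_smul, norm_inv, norm_of_nonneg (sqrt_nonneg t)]
  simp

lemma quadFourierCoeff_neg (a : ℝ) (n : ℤ) :
    quadFourierCoeff (-a) n = conj (quadFourierCoeff a (-n)) := by
  rw [quadFourierCoeff, quadFourierCoeff, ← intervalIntegral_conj]
  refine integral_congr fun x _ => ?_
  rw [← Complex.exp_conj]
  simp only [map_mul, map_sub, conj_ofReal, conj_I, map_ofNat, map_pow, map_intCast]
  push_cast
  ring_nf

lemma norm_quadFourierCoeff_neg (a : ℝ) (n : ℤ) :
    ‖quadFourierCoeff (-a) n‖ = ‖quadFourierCoeff a (-n)‖ := by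
  rw [quadFourierCoeff_neg, RCLike.norm_conj]

lemma norm_quadFourierCoeff_le {t : ℝ} (ht : 0 < t) (n : ℤ) :
    ‖quadFourierCoeff t n‖ ≤ 2 * (√t)⁻¹ := by
  rw [norm_quadFourierCoeff ht, mul_comm 2 (√t)⁻¹]
  exact mul_le_mul_of_nonneg_left (norm_integral_fresnelPhase_le_two _ _) (by positivity)

lemma inv_ten_sqrt_le_norm_quadFourierCoeff {t : ℝ} {n : ℤ} (ht : 0 < t) (hn : √t ≤ n)
    (hn' : n ≤ 2 * t - √t) : (10 * √t)⁻¹ ≤ ‖quadFourierCoeff t n‖ := by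
  have hs : 0 < √t := sqrt_pos.2 ht
  have hst : √t * √t = t := mul_self_sqrt ht.le
  rw [norm_quadFourierCoeff ht, mul_inv, mul_comm 10⁻¹]
  refine mul_le_mul_of_nonneg_left ?_ (by positivity)
  rw [← one_div]
  refine one_tenth_le_norm_integral_fresnelPhase ?_ ?_
  · rw [neg_le_neg_iff, le_div_iff₀ (by positivity)]; nlinarith
  · rw [le_sub_iff_add_le, ← le_sub_iff_add_le', div_le_iff₀ (by positivity)]; nlinarith

/-- The solutions of the two frequency constraints, parametrized by `(n₁, n₃)`. -/
def thtParam (p : ℤ × ℤ) : ℤ × ℤ × ℤ × ℤ := (p.1, p.1 + 2 * p.2, p.2, -(2 * p.1 + 3 * p.2))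

lemma thtParam_injective : Function.Injective thtParam := fun p p' h => by
  simp only [thtParam, Prod.mk.injEq] at h
  exact Prod.ext h.1 h.2.2.1

/-- Keeps `n₁, n₂, n₃, -n₄` inside `[N/8, 15N/8]`, where `|F̂(n)| ≳ N^{-1/2}`. -/
noncomputable def thtBox (N : ℕ) : Finset (ℤ × ℤ) :=
  Finset.Ioc ((N : ℤ) / 8) (N / 4) ×ˢ Finset.Ioc ((N : ℤ) / 8) (N / 4)

lemma thtParam_mem_thtQuadruples {N : ℕ} {p : ℤ × ℤ} (hp : p ∈ thtBox N) :
    thtParam p ∈ thtQuadruples N := by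
  simp only [thtBox, Finset.mem_product, Finset.mem_Ioc] at hp
  simp only [thtParam, thtQuadruples, Finset.mem_filter, Finset.mem_product, Finset.mem_Icc]
  omega

lemma sq_le_card_thtBox {N : ℕ} (hN : 32 ≤ N) : (N : ℝ) ^ 2 ≤ 256 * (thtBox N).card := by
  have hside : N ≤ 16 * ((N : ℤ) / 4 - N / 8).toNat := by omega
  have hside' : (N : ℝ) ≤ 16 * ((N : ℤ) / 4 - N / 8).toNat := by exact_mod_cast hside
  rw [thtBox, Finset.card_product, Int.card_Ioc]
  push_cast
  nlinarith [(Nat.cast_nonneg N : (0 : ℝ) ≤ N)]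

lemma inv_ten_sqrt_le_norm_quadFourierCoeff_natCast {N : ℕ} {m : ℤ} (hN : 64 ≤ N)
    (hm : (N : ℤ) ≤ 8 * m) (hm' : 8 * m ≤ 15 * N) : (10 * √N)⁻¹ ≤ ‖quadFourierCoeff N m‖ := by
  have hN' : (64 : ℝ) ≤ N := by exact_mod_cast hN
  have hm₁ : (N : ℝ) ≤ 8 * m := by exact_mod_cast hm
  have hm₂ : 8 * (m : ℝ) ≤ 15 * N := by exact_mod_cast hm'
  have hs : 8 ≤ √N := le_sqrt_of_sq_le (by linarith)
  have hss : √N * √N = N := mul_self_sqrt (by positivity)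
  exact inv_ten_sqrt_le_norm_quadFourierCoeff (by positivity) (by nlinarith) (by nlinarith)

noncomputable def thtTerm (N : ℕ) (q : ℤ × ℤ × ℤ × ℤ) : ℝ :=
  ‖quadFourierCoeff (N : ℝ) q.1‖ * ‖quadFourierCoeff (N : ℝ) q.2.1‖ *
    ‖quadFourierCoeff (N : ℝ) q.2.2.1‖ * ‖quadFourierCoeff (-(N : ℝ)) q.2.2.2‖

lemma sqrt_pow_four {x : ℝ} (hx : 0 ≤ x) : √x ^ 4 = x ^ 2 := by
  rw [show 4 = 2 * 2 from rfl, pow_mul, sq_sqrt hx]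

lemma inv_ten_sqrt_pow_four_le_thtTerm {N : ℕ} (hN : 64 ≤ N) {p : ℤ × ℤ} (hp : p ∈ thtBox N) :
    (10 * √N)⁻¹ ^ 4 ≤ thtTerm N (thtParam p) := by
  simp only [thtBox, Finset.mem_product, Finset.mem_Ioc] at hp
  have h₁ := inv_ten_sqrt_le_norm_quadFourierCoeff_natCast hN (m := p.1) (by omega) (by omega)
  have h₂ := inv_ten_sqrt_le_norm_quadFourierCoeff_natCast hN (m := p.1 + 2 * p.2)
    (by omega) (by omega)
  have h₃ := inv_ten_sqrt_le_norm_quadFourierCoeff_natCast hN (m := p.2) (by omega) (by omega)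
  have h₄ := inv_ten_sqrt_le_norm_quadFourierCoeff_natCast hN (m := 2 * p.1 + 3 * p.2)
    (by omega) (by omega)
  rw [← neg_neg (2 * p.1 + 3 * p.2), ← norm_quadFourierCoeff_neg] at h₄
  calc (10 * √N)⁻¹ ^ 4 = (10 * √N)⁻¹ * (10 * √N)⁻¹ * (10 * √N)⁻¹ * (10 * √N)⁻¹ := by ring
    _ ≤ thtTerm N (thtParam p) := by rw [thtTerm, thtParam]; gcongr

lemma le_sum_thtTerm {N : ℕ} (hN : 64 ≤ N) :
    1 / 2560000 ≤ ∑ q ∈ thtQuadruples N, thtTerm N q := by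
  have hN₀ : (0 : ℝ) < N := by exact_mod_cast (by omega : 0 < N)
  have hcard := sq_le_card_thtBox (N := N) (by omega)
  calc (1 : ℝ) / 2560000 ≤ (thtBox N).card * (10 * √N)⁻¹ ^ 4 := by
        rw [inv_pow, mul_pow, sqrt_pow_four hN₀.le, le_mul_inv_iff₀ (by positivity)]
        linarith
    _ ≤ ∑ p ∈ thtBox N, thtTerm N (thtParam p) := by
        simpa using Finset.card_nsmul_le_sum _ _ _ fun p hp =>
          inv_ten_sqrt_pow_four_le_thtTerm hN hp
    _ = ∑ q ∈ (thtBox N).image thtParam, thtTerm N q :=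
        (Finset.sum_image fun p _ p' _ h => thtParam_injective h).symm
    _ ≤ ∑ q ∈ thtQuadruples N, thtTerm N q :=
        Finset.sum_le_sum_of_subset_of_nonneg
          (Finset.image_subset_iff.2 fun p hp => thtParam_mem_thtQuadruples hp)
          fun q _ _ => by unfold thtTerm; positivity

/-- For `Fᵢ(x) = e^{2πiNx²}` (`i = 1,2,3`) and `F₄(x) = e^{−2πiNx²}`: (a) the sum of
`∏ᵢ |F̂ᵢ(nᵢ)|` over the constrained quadruples with `|nᵢ| ≤ 2N` is at least `c`;
(b) `sup_n |F̂ᵢ(n)| ≤ C N^{-1/2}` for each `i`; consequently the sum in (a) is at least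
`(c/C⁴) N² ∏ᵢ ‖F̂ᵢ‖_∞`, so it is not `O(maxᵢ ‖F̂ᵢ‖_∞)`. -/
theorem trilinear_fourier_counterexample :
    ∃ c C : ℝ, 0 < c ∧ 0 < C ∧ ∃ N₀ : ℕ, ∀ N : ℕ, N₀ ≤ N →
      (c ≤ ∑ q ∈ thtQuadruples N,
          ‖quadFourierCoeff (N : ℝ) q.1‖ * ‖quadFourierCoeff (N : ℝ) q.2.1‖ *
            ‖quadFourierCoeff (N : ℝ) q.2.2.1‖ * ‖quadFourierCoeff (-(N : ℝ)) q.2.2.2‖) ∧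
      (∀ n : ℤ, ‖quadFourierCoeff (N : ℝ) n‖ ≤ C * (N : ℝ) ^ (-(1/2) : ℝ) ∧
        ‖quadFourierCoeff (-(N : ℝ)) n‖ ≤ C * (N : ℝ) ^ (-(1/2) : ℝ)) ∧
      ((c / C ^ 4) * (N : ℝ) ^ 2 * (⨆ n : ℤ, ‖quadFourierCoeff (N : ℝ) n‖) ^ 3 *
          (⨆ n : ℤ, ‖quadFourierCoeff (-(N : ℝ)) n‖) ≤
        ∑ q ∈ thtQuadruples N,
          ‖quadFourierCoeff (N : ℝ) q.1‖ * ‖quadFourierCoeff (N : ℝ) q.2.1‖ *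
            ‖quadFourierCoeff (N : ℝ) q.2.2.1‖ * ‖quadFourierCoeff (-(N : ℝ)) q.2.2.2‖) := by
  refine ⟨1 / 2560000, 2, by norm_num, by norm_num, 64, fun N hN => ?_⟩
  have hN₀ : (0 : ℝ) < N := by exact_mod_cast (by omega : 0 < N)
  have hpos : ∀ n, ‖quadFourierCoeff N n‖ ≤ 2 * (√N)⁻¹ := norm_quadFourierCoeff_le hN₀
  have hneg : ∀ n, ‖quadFourierCoeff (-N) n‖ ≤ 2 * (√N)⁻¹ := fun n =>
    (norm_quadFourierCoeff_neg _ n).trans_le (hpos _)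
  have hsum := le_sum_thtTerm hN
  have hrpow : (N : ℝ) ^ (-(1 / 2) : ℝ) = (√N)⁻¹ := by rw [rpow_neg hN₀.le, sqrt_eq_rpow]
  refine ⟨hsum, fun n => hrpow ▸ ⟨hpos n, hneg n⟩, le_trans ?_ hsum⟩
  have hsup_pos := Real.iSup_le hpos (by positivity)
  have hsup_neg := Real.iSup_le hneg (by positivity)
  calc _ ≤ 1 / 2560000 / 2 ^ 4 * (N : ℝ) ^ 2 * (2 * (√N)⁻¹) ^ 3 * (2 * (√N)⁻¹) := by
        gcongr
        · exact Real.iSup_nonneg fun n => norm_nonneg _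
        · exact Real.iSup_nonneg fun n => norm_nonneg _
    _ = 1 / 2560000 := by
        field_simp
        rw [sqrt_pow_four hN₀.le]
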